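/- arXiv:1111.5484 — 2 statements merged into one kernel-verified Lean document; each statement's English description precedes it below -/
import Mathlib

section
/- For every integer k ≥ 2, let N_k denote the number of integers n with 2^{k−1} ≤ n ≤ 2^k − 1 such that S_{n,k} is satisfactory. Then N_k < k + (2^{(k+5)/2}/3)·√(k³·ln 2). -/
open Finset

/-- The value of column `j` (0-indexed) of the matrix
`H_k = [H_k^(k-1) | H_k^(k-2) | … | H_k^(0)]`, read as a `k`-bit integer with
row 1 as the most significant bit.  (Column `c` of the block `H_k^(m)` is the
vector `(0,…,0,1,binary_m(c))`, i.e. the integer `2^m + c`; the block `H_k^(m)`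
occupies global columns `[2^k - 2^(m+1), 2^k - 2^m)`, so that
`m = ⌊log₂ (2^k - 1 - j)⌋` and the value is `3·2^m + j - 2^k`.) -/
def colVal (k j : ℕ) : ℕ := 3 * 2 ^ Nat.log2 (2 ^ k - 1 - j) + j - 2 ^ k

/-- Row `i` (1-indexed, `1 ≤ i ≤ k`) of the matrix `H_k(n)` consisting of the
first `n` columns of `H_k`. -/
def Hrow (k n : ℕ) (i : ℕ) : Fin n → ZMod 2 :=
  fun j => if Nat.testBit (colVal k j) (k - i) then 1 else 0

/-- The code `S_{n,k}`: the binary linear code spanned by the rows of `H_k(n)`. -/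
def SCode (k n : ℕ) : Submodule (ZMod 2) (Fin n → ZMod 2) :=
  Submodule.span (ZMod 2) (Set.range fun i : Fin k => Hrow k n ((i : ℕ) + 1))

/-- `w_i`: the Hamming weight of the `i`-th (1-indexed) row of `H_k(n)`. -/
def rowWt (k n i : ℕ) : ℕ := hammingNorm (Hrow k n i)

/-- `α_i`: the `i`-th entry (1-indexed) of the last (`n`-th) column of `H_k(n)`;
`true` encodes `1` and `false` encodes `0`. -/
def alphaBit (k n i : ℕ) : Bool := Nat.testBit (colVal k (n - 1)) (k - i)

/-- Row `i` (1-indexed) of the matrix `M_{n,k}`, whose `j`-th column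
(0-indexed) is the `k`-bit binary representation of `2^k - 1 - j`, MSB first. -/
def Mrow (k n : ℕ) (i : ℕ) : Fin n → ZMod 2 :=
  fun j => if Nat.testBit (2 ^ k - 1 - (j : ℕ)) (k - i) then 1 else 0

/-- The code `D_{n,k}`: the binary linear code spanned by the rows of `M_{n,k}`. -/
def DCode (k n : ℕ) : Submodule (ZMod 2) (Fin n → ZMod 2) :=
  Submodule.span (ZMod 2) (Set.range fun i : Fin k => Mrow k n ((i : ℕ) + 1))

/-- The value of column `j` (0-indexed) of the generalized matrix consisting of
`t-1` copies of `H_k^(k-1)` followed by `H_k(n')`, where `n = 2^(k-1)·(t-1) + n'`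
with `2^(k-1) ≤ n' ≤ 2^k - 1` (so `t - 1 = (n - 2^(k-1)) / 2^(k-1)`). -/
def gcolVal (k n j : ℕ) : ℕ :=
  if j < (n - 2 ^ (k - 1)) / 2 ^ (k - 1) * 2 ^ (k - 1) then
    2 ^ (k - 1) + j % 2 ^ (k - 1)
  else colVal k (j - (n - 2 ^ (k - 1)) / 2 ^ (k - 1) * 2 ^ (k - 1))

/-- The generalized code `S_{n,k}`, defined for every `n ≥ 2^(k-1)`:
the span of the rows of the `k × n` matrix obtained by concatenating `t-1`
copies of `H_k^(k-1)` followed by `H_k(n')`. -/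
def GSCode (k n : ℕ) : Submodule (ZMod 2) (Fin n → ZMod 2) :=
  Submodule.span (ZMod 2)
    (Set.range fun i : Fin k => fun j : Fin n =>
      if Nat.testBit (gcolVal k n (j : ℕ)) (k - ((i : ℕ) + 1)) then (1 : ZMod 2) else 0)

/-- The minimum distance of a binary linear code: the least Hamming weight of a
nonzero codeword. -/
noncomputable def minDist {n : ℕ} (C : Submodule (ZMod 2) (Fin n → ZMod 2)) : ℕ :=
  sInf {w | ∃ c ∈ C, c ≠ 0 ∧ hammingNorm c = w}

/-- `A_w`: the number of codewords of `C` of Hamming weight `w`. -/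
noncomputable def numWt {n : ℕ} (C : Submodule (ZMod 2) (Fin n → ZMod 2)) (w : ℕ) : ℕ :=
  Set.ncard {c : Fin n → ZMod 2 | c ∈ C ∧ hammingNorm c = w}

/-- The undetected error probability
`P_ue(C,p) = Σ_{w=1}^n A_w p^w (1-p)^(n-w)`. -/
noncomputable def Pue {n : ℕ} (C : Submodule (ZMod 2) (Fin n → ZMod 2)) (p : ℝ) : ℝ :=
  ∑ w ∈ Finset.Icc 1 n, (numWt C w : ℝ) * p ^ w * (1 - p) ^ (n - w)

/-- A code is proper if `p ↦ P_ue(C,p)` is monotonically increasing on `[0, 1/2]`. -/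
def IsProper {n : ℕ} (C : Submodule (ZMod 2) (Fin n → ZMod 2)) : Prop :=
  MonotoneOn (Pue C) (Set.Icc (0 : ℝ) (1 / 2))

/-- An `[n,k]` code is satisfactory if `P_ue(C,p) ≤ 2^(k-n)` for all `p ∈ [0,1/2]`. -/
def IsSatisfactory (k : ℕ) {n : ℕ} (C : Submodule (ZMod 2) (Fin n → ZMod 2)) : Prop :=
  ∀ p ∈ Set.Icc (0 : ℝ) (1 / 2), Pue C p ≤ (2 : ℝ) ^ ((k : ℤ) - (n : ℤ))

/-- The binary entropy function `h(x) = -x log₂ x - (1-x) log₂ (1-x)`. -/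
noncomputable def binEnt (x : ℝ) : ℝ :=
  -(x * Real.logb 2 x) - (1 - x) * Real.logb 2 (1 - x)

/-- `U_m = (2^(m+2) - 3)·(1 - h((2^(m+1) - 2)/(2^(m+2) - 3)))`. -/
noncomputable def Ufun (m : ℕ) : ℝ :=
  ((2 : ℝ) ^ (m + 2) - 3) * (1 - binEnt (((2 : ℝ) ^ (m + 1) - 2) / ((2 : ℝ) ^ (m + 2) - 3)))

/-!
For `n = 2^k - 2^(M+1) + s` with `1 ≤ s ≤ 2^M`, the masks `y < 2^k` with
`y ≡ 2^(M-1) [MOD 2^(M+1)]` give `2^(k-1-M)` codewords of `S_{n,k}` of a common weight `w`,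
where `n = 2w + D` and `D = min s (2^M - s)`. The satisfactory bound at `p = w / n`, together with
`(1 - u) log (1 - u) + (1 + u) log (1 + u) ≥ u²`, forces `D² ≤ 2^(k+1) (M + 1) log 2`. Hence in the
`M`-th block only the `O(√(2^k M))` values of `s` closest to its ends can be satisfactory; summing
`√(M + 1)` over the blocks `M ≥ k/2 + 2` and counting the smaller blocks trivially gives the bound.
-/

lemma count_congr_of_lt {p q : ℕ → Prop} [DecidablePred p] [DecidablePred q] {s : ℕ}
    (h : ∀ c < s, p c ↔ q c) : Nat.count p s = Nat.count q s := by
  simp only [Nat.count_eq_card_filter_range]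
  exact congrArg card (filter_congr fun c hc => h c (mem_range.1 hc))

lemma count_min_sub_le (N b : ℕ) : Nat.count (fun r => min r (N - r) ≤ b) N ≤ 2 * b + 1 := by
  rw [Nat.count_eq_card_filter_range]
  calc #{r ∈ range N | min r (N - r) ≤ b} ≤ #(range (b + 1) ∪ Ico (N - b) N) := by
        refine card_le_card fun r hr => ?_
        simp only [mem_filter, mem_range] at hr
        simp only [mem_union, mem_range, mem_Ico]
        omega
    _ ≤ 2 * b + 1 := by
        refine (card_union_le _ _).trans ?_
        rw [card_range, Nat.card_Ico]
        omega

lemma count_two_pow_eq_add_sum (Q : ℕ → Prop) [DecidablePred Q] {a b : ℕ} (hab : a ≤ b) :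
    Nat.count Q (2 ^ b) =
      Nat.count Q (2 ^ a) + ∑ M ∈ Ico a b, Nat.count (fun r => Q (2 ^ M + r)) (2 ^ M) := by
  induction b, hab using Nat.le_induction with
  | base => simp
  | succ b hab ih => rw [sum_Ico_succ_top hab, ← add_assoc, ← ih, pow_succ, mul_two, Nat.count_add]

def bitDot (y c L : ℕ) : ZMod 2 :=
  ∑ t ∈ range L, if y.testBit t && c.testBit t then 1 else 0

lemma bitDot_xor (y a b L : ℕ) : bitDot y (a ^^^ b) L = bitDot y a L + bitDot y b L := by
  simp only [bitDot, ← sum_add_distrib, Nat.testBit_xor]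
  refine sum_congr rfl fun t _ => ?_
  cases y.testBit t <;> cases a.testBit t <;> cases b.testBit t <;> decide

lemma bitDot_two_pow {y t L : ℕ} (ht : t < L) :
    bitDot y (2 ^ t) L = if y.testBit t then 1 else 0 := by
  rw [bitDot, sum_eq_single_of_mem t (mem_range.2 ht)]
  · simp
  · intro i _ hi
    simp [Ne.symm hi]

lemma count_bitDot_eq_one {y t L K : ℕ} (htL : t < L) (htK : t < K) (hy : y.testBit t) :
    Nat.count (fun c => bitDot y c K = 1) (2 ^ L) = 2 ^ (L - 1) := by
  have hflip (c : ℕ) : bitDot y (c ^^^ 2 ^ t) K = bitDot y c K + 1 := by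
    simp [bitDot_xor, bitDot_two_pow htK, hy]
  have hlt : 2 ^ t < 2 ^ L := Nat.pow_lt_pow_right (by norm_num) htL
  have hx : ∀ x : ZMod 2, x + 1 = 1 ↔ ¬x = 1 := by decide
  have hswap : #{c ∈ range (2 ^ L) | bitDot y c K = 1} =
      #{c ∈ range (2 ^ L) | ¬bitDot y c K = 1} := by
    apply card_nbij' (· ^^^ 2 ^ t) (· ^^^ 2 ^ t)
    all_goals
      intro c hc
      simp_all [Nat.xor_lt_two_pow]
  have htotal := card_filter_add_card_filter_not (s := range (2 ^ L)) (fun c => bitDot y c K = 1)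
  rw [card_range, ← hswap] at htotal
  rw [Nat.count_eq_card_filter_range]
  have h2 : 2 ^ L = 2 * 2 ^ (L - 1) := by rw [← pow_succ']; congr 1; omega
  omega

lemma colVal_two_pow_sub_add {k m c : ℕ} (hm : m < k) (hc : c < 2 ^ m) :
    colVal k (2 ^ k - 2 ^ (m + 1) + c) = 2 ^ m + c := by
  have hpow : 2 ^ (m + 1) ≤ 2 ^ k := Nat.pow_le_pow_right (by norm_num) hm
  have hlog : Nat.log2 (2 ^ k - 1 - (2 ^ k - 2 ^ (m + 1) + c)) = m := by
    rw [Nat.log2_eq_log_two]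
    apply Nat.log_eq_of_pow_le_of_lt_pow <;> omega
  rw [colVal, hlog]
  omega

section ColumnCount

variable {P : ℕ → Prop} [DecidablePred P]

lemma count_comp_colVal_add {k m s : ℕ} (hm : m < k) (hs : s ≤ 2 ^ m) :
    Nat.count (P ∘ colVal k) (2 ^ k - 2 ^ (m + 1) + s) =
      Nat.count (P ∘ colVal k) (2 ^ k - 2 ^ (m + 1)) + Nat.count (fun c => P (2 ^ m + c)) s := by
  rw [Nat.count_add]
  exact congrArg _ (count_congr_of_lt fun c hc => by
    rw [Function.comp_apply, colVal_two_pow_sub_add hm (by omega)])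

/-- The first `2^k - 2^m` columns of `H_k` are the integers of `[2^m, 2^k)`, each once. -/
lemma count_comp_colVal_add_count {k m : ℕ} (hm : m ≤ k) :
    Nat.count (P ∘ colVal k) (2 ^ k - 2 ^ m) + Nat.count P (2 ^ m) = Nat.count P (2 ^ k) := by
  induction hm using Nat.decreasingInduction with
  | self => simp
  | of_succ m hm ih =>
    have hpow : 2 ^ m * 2 ≤ 2 ^ k := by rw [← pow_succ]; exact Nat.pow_le_pow_right (by norm_num) hm
    have hblock := count_comp_colVal_add (P := P) hm (le_refl (2 ^ m))
    have hsplit := Nat.count_add (p := P) (2 ^ m) (2 ^ m)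
    rw [pow_succ] at hblock ih
    rw [show 2 ^ k - 2 ^ m * 2 + 2 ^ m = 2 ^ k - 2 ^ m by omega] at hblock
    rw [← two_mul, mul_comm] at hsplit
    omega

end ColumnCount

/-- The codeword `∑ᵢ yᵢ Hᵢ` of `S_{n,k}`, where `Hᵢ` is row `i` of `H_k(n)` and `yᵢ` is bit
`k - i` of `y`. -/
def codeword (k n y : ℕ) : Fin n → ZMod 2 := fun j => bitDot y (colVal k j) k

lemma codeword_mem_SCode (k n y : ℕ) : codeword k n y ∈ SCode k n := by
  have hsum : codeword k n y =
      ∑ i : Fin k, (if y.testBit (k - (i + 1)) then (1 : ZMod 2) else 0) • Hrow k n (i + 1) := by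
    funext j
    rw [Finset.sum_apply, Fin.sum_univ_eq_sum_range (fun i =>
      ((if y.testBit (k - (i + 1)) then (1 : ZMod 2) else 0) • Hrow k n (i + 1)) j) k,
      ← sum_range_reflect, codeword, bitDot]
    refine sum_congr rfl fun i hi => ?_
    rw [mem_range] at hi
    simp only [Hrow, Pi.smul_apply, show k - (k - 1 - i + 1) = i by omega]
    cases y.testBit i <;> cases (colVal k j).testBit i <;> simp
  rw [hsum, SCode]
  exact Submodule.sum_mem _ fun i _ => Submodule.smul_mem _ _ (Submodule.subset_span ⟨i, rfl⟩)

lemma hammingNorm_codeword (k n y : ℕ) :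
    hammingNorm (codeword k n y) = Nat.count (fun j => bitDot y (colVal k j) k = 1) n := by
  have hne : ∀ x : ZMod 2, x ≠ 0 ↔ x = 1 := by decide
  rw [hammingNorm, Nat.count_eq_card_filter_range, card_filter, card_filter,
    ← Fin.sum_univ_eq_sum_range]
  simp only [codeword, hne]

lemma codeword_apply_two_pow {k n y t : ℕ} (ht : t < k) (hn : 2 ^ k - 2 ^ (t + 1) < n) :
    codeword k n y ⟨_, hn⟩ = if y.testBit t then 1 else 0 := by
  have hcol := colVal_two_pow_sub_add (k := k) ht (Nat.two_pow_pos t)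
  rw [add_zero, add_zero] at hcol
  simp only [codeword, hcol, bitDot_two_pow ht]

lemma count_testBit {t s : ℕ} (hs : s ≤ 2 ^ (t + 1)) :
    Nat.count (fun c => c.testBit t) s = s - 2 ^ t := by
  have hfilter : {c ∈ range s | c.testBit t} = Ico (2 ^ t) s := by
    ext c
    simp only [mem_filter, mem_range, mem_Ico]
    refine ⟨fun ⟨hc, hbit⟩ => ⟨Nat.ge_two_pow_of_testBit hbit, hc⟩, fun ⟨hle, hc⟩ => ⟨hc, ?_⟩⟩
    obtain ⟨d, rfl⟩ := Nat.exists_eq_add_of_le hle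
    rw [Nat.testBit_two_pow_add_eq, Nat.testBit_lt_two_pow (by rw [pow_succ] at hs; omega)]
    rfl
  rw [Nat.count_eq_card_filter_range, hfilter, Nat.card_Ico]

lemma testBit_of_mod_two_pow_eq {y M t : ℕ} (hy : y % 2 ^ (M + 1) = 2 ^ (M - 1))
    (ht : t < M + 1) : y.testBit t = decide (t = M - 1) := by
  have := Nat.testBit_mod_two_pow y (M + 1) t
  rw [hy, Nat.testBit_two_pow] at this
  simpa [ht, eq_comm] using this.symm

lemma bitDot_two_pow_add_of_mod_eq {y k M c : ℕ} (hM : 1 ≤ M) (hMk : M < k)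
    (hy : y % 2 ^ (M + 1) = 2 ^ (M - 1)) (hc : c < 2 ^ M) :
    bitDot y (2 ^ M + c) k = if c.testBit (M - 1) then 1 else 0 := by
  rw [bitDot, sum_eq_single_of_mem (M - 1) (mem_range.2 (by omega)),
    testBit_of_mod_two_pow_eq hy (by omega), Nat.testBit_two_pow_add_gt (by omega)]
  · simp
  intro t _ htne
  by_cases htM : t < M + 1
  · simp [testBit_of_mod_two_pow_eq hy htM, htne]
  · have : 2 ^ M + c < 2 ^ t := by
      calc 2 ^ M + c < 2 ^ (M + 1) := by rw [pow_succ]; omega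
        _ ≤ 2 ^ t := Nat.pow_le_pow_right (by norm_num) (by omega)
    simp [Nat.testBit_lt_two_pow this]

lemma hammingNorm_codeword_of_mod_eq {k M s y : ℕ} (hM : 1 ≤ M) (hMk : M < k)
    (hy : y % 2 ^ (M + 1) = 2 ^ (M - 1)) (hs : s ≤ 2 ^ M) :
    hammingNorm (codeword k (2 ^ k - 2 ^ (M + 1) + s) y) =
      2 ^ (k - 1) - 2 ^ M + (s - 2 ^ (M - 1)) := by
  set Q : ℕ → Prop := fun v => bitDot y v k = 1
  have hbit : y.testBit (M - 1) := by
    simpa using testBit_of_mod_two_pow_eq hy (t := M - 1) (by omega)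
  have hall : Nat.count Q (2 ^ k) = 2 ^ (k - 1) := count_bitDot_eq_one (by omega) (by omega) hbit
  have hlow : Nat.count Q (2 ^ (M + 1)) = 2 ^ M := count_bitDot_eq_one (by omega) (by omega) hbit
  have hhigh := count_comp_colVal_add_count (P := Q) (m := M + 1) (k := k) (by omega)
  have hpart : Nat.count (fun c => Q (2 ^ M + c)) s = s - 2 ^ (M - 1) := by
    rw [← count_testBit (by rwa [Nat.sub_add_cancel hM])]
    refine count_congr_of_lt fun c hc => ?_
    simp only [Q, bitDot_two_pow_add_of_mod_eq hM hMk hy (by omega : c < 2 ^ M)]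
    cases c.testBit (M - 1) <;> decide
  have hsplit := count_comp_colVal_add (P := Q) hMk hs
  rw [hammingNorm_codeword]
  exact hsplit.trans (by omega)

/-- The witnesses are the codewords of the masks `y < 2^k` with `y ≡ 2^(M-1) [MOD 2^(M+1)]`. -/
lemma pow_le_numWt_SCode {k M s : ℕ} (hM : 1 ≤ M) (hMk : M + 2 ≤ k) (hs : 1 ≤ s) (hs' : s ≤ 2 ^ M) :
    2 ^ (k - 1 - M) ≤ numWt (SCode k (2 ^ k - 2 ^ (M + 1) + s))
      (2 ^ (k - 1) - 2 ^ M + (s - 2 ^ (M - 1))) := by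
  set n := 2 ^ k - 2 ^ (M + 1) + s
  set mask : ℕ → ℕ := fun h => 2 ^ (M + 1) * h + 2 ^ (M - 1)
  have hlt : 2 ^ (M - 1) < 2 ^ (M + 1) := Nat.pow_lt_pow_right (by norm_num) (by omega)
  have hmask (h : ℕ) : mask h % 2 ^ (M + 1) = 2 ^ (M - 1) := by
    simp [mask, Nat.mod_eq_of_lt hlt]
  have hinj : Set.InjOn (codeword k n ∘ mask) (range (2 ^ (k - 1 - M))) := by
    intro a ha b hb hab
    simp only [coe_range, Set.mem_Iio] at ha hb
    refine Nat.eq_of_testBit_eq fun i => ?_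
    by_cases hi : i < k - 1 - M
    · have hn : 2 ^ k - 2 ^ (i + (M + 1) + 1) < n := by
        have : 2 ^ (M + 1) ≤ 2 ^ (i + (M + 1) + 1) := Nat.pow_le_pow_right (by norm_num) (by omega)
        omega
      have := congrFun hab ⟨_, hn⟩
      simp only [Function.comp_apply, codeword_apply_two_pow (by omega : i + (M + 1) < k),
        mask, Nat.testBit_two_pow_mul_add _ hlt, if_neg (by omega : ¬i + (M + 1) < M + 1),
        Nat.add_sub_cancel] at this
      cases ha' : a.testBit i <;> cases hb' : b.testBit i <;> simp_all
    · have hpow : 2 ^ (k - 1 - M) ≤ 2 ^ i := Nat.pow_le_pow_right (by norm_num) (by omega)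
      rw [Nat.testBit_lt_two_pow (by omega), Nat.testBit_lt_two_pow (by omega)]
  have hsub : ↑((range (2 ^ (k - 1 - M))).image (codeword k n ∘ mask)) ⊆
      {c | c ∈ SCode k n ∧ hammingNorm c = 2 ^ (k - 1) - 2 ^ M + (s - 2 ^ (M - 1))} := by
    simp only [coe_image, Set.image_subset_iff]
    intro h _
    exact ⟨codeword_mem_SCode k n _, hammingNorm_codeword_of_mod_eq hM (by omega) (hmask h) hs'⟩
  calc 2 ^ (k - 1 - M) = #((range (2 ^ (k - 1 - M))).image (codeword k n ∘ mask)) := by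
        rw [card_image_of_injOn hinj, card_range]
    _ ≤ numWt (SCode k n) _ := by
        rw [numWt, ← Set.ncard_coe_finset]
        exact Set.ncard_le_ncard hsub (Set.toFinite _)

open Real

lemma two_mul_le_log_sub_log {x : ℝ} (h0 : 0 ≤ x) (h1 : x < 1) :
    2 * x ≤ log (1 + x) - log (1 - x) := by
  have hs := Real.hasSum_log_sub_log_of_abs_lt_one (by rwa [abs_of_nonneg h0])
  simpa using le_hasSum hs 0 fun j _ => by positivity

lemma sq_le_mul_log_add_mul_log {u : ℝ} (h0 : 0 ≤ u) (h1 : u < 1) :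
    u ^ 2 ≤ (1 - u) * log (1 - u) + (1 + u) * log (1 + u) := by
  set f : ℝ → ℝ := fun v => (1 - v) * log (1 - v) + (1 + v) * log (1 + v) - v ^ 2
  have hderiv : ∀ v ∈ Set.Ico (0 : ℝ) 1,
      HasDerivAt f (log (1 + v) - log (1 - v) - 2 * v) v := by
    intro v ⟨hv0, hv1⟩
    have hl : HasDerivAt (fun v => 1 - v) (-1) v := by simpa using (hasDerivAt_id v).const_sub 1
    have hr : HasDerivAt (fun v => 1 + v) 1 v := by simpa using (hasDerivAt_id v).const_add 1
    have hsub : HasDerivAt (fun v => (1 - v) * log (1 - v))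
        (-1 * log (1 - v) + (1 - v) * (-1 / (1 - v))) v := hl.mul (hl.log (by linarith))
    have hadd : HasDerivAt (fun v => (1 + v) * log (1 + v))
        (1 * log (1 + v) + (1 + v) * (1 / (1 + v))) v := hr.mul (hr.log (by linarith))
    refine ((hsub.add hadd).sub (hasDerivAt_pow 2 v)).congr_deriv ?_
    field_simp
    ring
  have hmono : MonotoneOn f (Set.Ico 0 1) := by
    refine monotoneOn_of_hasDerivWithinAt_nonneg (convex_Ico 0 1)
      (fun v hv => (hderiv v hv).continuousAt.continuousWithinAt)
      (fun v hv => (hderiv v (interior_subset hv)).hasDerivWithinAt) fun v hv => ?_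
    rw [interior_Ico] at hv
    linarith [two_mul_le_log_sub_log hv.1.le hv.2]
  have := hmono ⟨le_rfl, one_pos⟩ ⟨h0, h1⟩ h0
  simp only [f] at this
  norm_num at this
  linarith

lemma sq_le_mul_log_of_pow_mul_pow_le {w D : ℕ} {R : ℝ} (hw : 0 < w)
    (h : (1 - D / (2 * w + D : ℝ)) ^ w * (1 + D / (2 * w + D : ℝ)) ^ (w + D) ≤ R) :
    (D : ℝ) ^ 2 ≤ 2 * (2 * w + D) * log R := by
  set n : ℝ := 2 * w + D
  set u : ℝ := D / n
  have hwpos : (0 : ℝ) < w := by exact_mod_cast hw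
  have hn : 0 < n := by positivity
  have hu0 : 0 ≤ u := by positivity
  have hu1 : u < 1 := (div_lt_one hn).2 (by simp only [n]; linarith)
  have hpos : 0 < (1 - u) ^ w * (1 + u) ^ (w + D) := by
    have : 0 < 1 - u := by linarith
    positivity
  have hnu : n * u = D := mul_div_cancel₀ _ hn.ne'
  have hlog : (n / 2) * ((1 - u) * log (1 - u) + (1 + u) * log (1 + u)) ≤ log R := by
    have := Real.log_le_log hpos h
    rw [Real.log_mul (by positivity) (by positivity), Real.log_pow, Real.log_pow] at this
    push_cast at this
    convert this using 1
    linear_combination (log (1 - u) / 2 + log (1 + u) / 2) * (rfl : n = 2 * w + D) +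
      (log (1 + u) / 2 - log (1 - u) / 2) * hnu
  have hsq := sq_le_mul_log_add_mul_log hu0 hu1
  have : (D : ℝ) ^ 2 = 2 * n * ((n / 2) * u ^ 2) := by rw [← hnu]; ring
  rw [this]
  gcongr
  exact (mul_le_mul_of_nonneg_left hsq (by positivity)).trans hlog

lemma two_pow_mul_le_of_isSatisfactory {k n w a : ℕ} {C : Submodule (ZMod 2) (Fin n → ZMod 2)}
    (hC : IsSatisfactory k C) (hw : 1 ≤ w) (hwn : w ≤ n) (ha : 2 ^ a ≤ numWt C w)
    {u : ℝ} (hu0 : 0 ≤ u) (hu1 : u ≤ 1) :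
    2 ^ a * ((1 - u) ^ w * (1 + u) ^ (n - w)) ≤ 2 ^ k := by
  set p := (1 - u) / 2
  have hp : p ∈ Set.Icc (0 : ℝ) (1 / 2) := ⟨by simp only [p]; linarith, by simp only [p]; linarith⟩
  have hp1 : 0 ≤ 1 - p := by linarith [hp.2]
  have hterm : (numWt C w : ℝ) * p ^ w * (1 - p) ^ (n - w) ≤ Pue C p :=
    single_le_sum (f := fun w => (numWt C w : ℝ) * p ^ w * (1 - p) ^ (n - w))
      (fun i _ => by have := hp.1; positivity) (mem_Icc.2 ⟨hw, hwn⟩)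
  have hscale : p ^ w * (1 - p) ^ (n - w) * 2 ^ n = (1 - u) ^ w * (1 + u) ^ (n - w) := by
    obtain ⟨m, rfl⟩ := Nat.exists_eq_add_of_le hwn
    rw [show 1 - p = (1 + u) / 2 by ring, Nat.add_sub_cancel_left, div_pow, div_pow, pow_add]
    field_simp
  have hpow : (2 : ℝ) ^ ((k : ℤ) - n) * 2 ^ n = 2 ^ k := by
    rw [← zpow_natCast, ← zpow_add₀ two_ne_zero, sub_add_cancel, zpow_natCast]
  have hA : (2 : ℝ) ^ a ≤ numWt C w := by exact_mod_cast ha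
  rw [← hscale, ← hpow, ← mul_assoc, ← mul_assoc]
  gcongr
  calc (2 : ℝ) ^ a * p ^ w * (1 - p) ^ (n - w) ≤ numWt C w * p ^ w * (1 - p) ^ (n - w) := by
        have := hp.1
        gcongr
    _ ≤ _ := hterm.trans (hC p hp)

lemma min_sq_le_of_isSatisfactory {k M s : ℕ} (hM : 1 ≤ M) (hMk : M + 2 ≤ k) (hs : 1 ≤ s)
    (hs' : s ≤ 2 ^ M) (hsat : IsSatisfactory k (SCode k (2 ^ k - 2 ^ (M + 1) + s))) :
    ((min s (2 ^ M - s) : ℕ) : ℝ) ^ 2 ≤ 2 ^ (k + 1) * log 2 * (M + 1) := by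
  set w := 2 ^ (k - 1) - 2 ^ M + (s - 2 ^ (M - 1))
  set D := min s (2 ^ M - s)
  have hM2 : 2 ^ M = 2 * 2 ^ (M - 1) := by rw [← pow_succ']; congr 1; omega
  have hk2 : 2 ^ k = 2 * 2 ^ (k - 1) := by rw [← pow_succ']; congr 1; omega
  have hMk2 : 2 ^ (M + 1) ≤ 2 ^ (k - 1) := Nat.pow_le_pow_right (by norm_num) (by omega)
  rw [pow_succ] at hMk2
  have hn : 2 ^ k - 2 ^ (M + 1) + s = 2 * w + D := by rw [pow_succ]; omega
  have hw : 1 ≤ w := by omega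
  -- `p = (1 - u) / 2 = w / n` maximises `p ^ w * (1 - p) ^ (n - w)`
  set u : ℝ := D / (2 * w + D)
  have hu0 : 0 ≤ u := by positivity
  have hu1 : u ≤ 1 := div_le_one_of_le₀ (by linarith [(Nat.cast_nonneg w : (0 : ℝ) ≤ w)])
    (by positivity)
  have h := two_pow_mul_le_of_isSatisfactory hsat hw (by omega) (pow_le_numWt_SCode hM hMk hs hs')
    hu0 hu1
  rw [show 2 ^ k - 2 ^ (M + 1) + s - w = w + D by omega,
    show (2 : ℝ) ^ k = 2 ^ (k - 1 - M) * 2 ^ (M + 1) by rw [← pow_add]; congr 1; omega] at h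
  have hD := sq_le_mul_log_of_pow_mul_pow_le (R := 2 ^ (M + 1)) hw
    (le_of_mul_le_mul_left h (by positivity))
  have hnk : (2 * w + D : ℝ) ≤ 2 ^ k := by exact_mod_cast (show 2 * w + D ≤ 2 ^ k by omega)
  rw [Real.log_pow] at hD
  calc (D : ℝ) ^ 2 ≤ 2 * (2 * w + D) * ((M + 1 : ℕ) * log 2) := hD
    _ ≤ 2 * 2 ^ k * ((M + 1 : ℕ) * log 2) := by gcongr
    _ = 2 ^ (k + 1) * log 2 * (M + 1) := by push_cast; ring

open scoped Classical in
lemma count_satisfactory_block_le {k M : ℕ} (hM : 1 ≤ M) (hMk : M + 2 ≤ k) :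
    Nat.count (fun r => IsSatisfactory k (SCode k (2 ^ k - (2 ^ M + r)))) (2 ^ M) ≤
      2 * ⌊√(2 ^ (k + 1) * log 2 * (M + 1))⌋₊ + 1 := by
  refine (Nat.count_mono_left fun r hr hsat => ?_).trans (count_min_sub_le _ _)
  have hMk' : 2 ^ (M + 1) ≤ 2 ^ k := Nat.pow_le_pow_right (by norm_num) (by omega)
  rw [pow_succ] at hMk'
  rw [show 2 ^ k - (2 ^ M + r) = 2 ^ k - 2 ^ (M + 1) + (2 ^ M - r) by rw [pow_succ]; omega] at hsat
  have h := min_sq_le_of_isSatisfactory hM hMk (by omega) (by omega) hsat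
  rw [Nat.sub_sub_self hr.le, min_comm] at h
  exact Nat.le_floor (Real.le_sqrt_of_sq_le h)

open scoped Classical in
lemma ncard_satisfactory_le {k m : ℕ} (hm : 1 ≤ m) (hmk : m ≤ k - 1) :
    Set.ncard {n : ℕ | 2 ^ (k - 1) ≤ n ∧ n ≤ 2 ^ k - 1 ∧ IsSatisfactory k (SCode k n)} ≤
      1 + 2 ^ m + ∑ M ∈ Ico m (k - 1), (2 * ⌊√(2 ^ (k + 1) * log 2 * (M + 1))⌋₊ + 1) := by
  set Q : ℕ → Prop := fun g => IsSatisfactory k (SCode k (2 ^ k - g))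
  have hk : 2 ^ k = 2 * 2 ^ (k - 1) := by rw [← pow_succ']; congr 1; omega
  have himage : {n : ℕ | 2 ^ (k - 1) ≤ n ∧ n ≤ 2 ^ k - 1 ∧ IsSatisfactory k (SCode k n)} ⊆
      (2 ^ k - ·) '' ↑{g ∈ range (2 ^ (k - 1) + 1) | Q g} := by
    rintro n ⟨hn1, hn2, hsat⟩
    have hn : 2 ^ k - (2 ^ k - n) = n := by omega
    refine ⟨2 ^ k - n, mem_filter.2 ⟨mem_range.2 (by omega), ?_⟩, hn⟩
    show IsSatisfactory k (SCode k (2 ^ k - (2 ^ k - n)))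
    rwa [hn]
  have hcount : Nat.count Q (2 ^ (k - 1) + 1) ≤ Nat.count Q (2 ^ (k - 1)) + 1 := by
    rw [Nat.count_succ]; split_ifs <;> omega
  rw [count_two_pow_eq_add_sum Q hmk] at hcount
  calc _ ≤ Nat.count Q (2 ^ (k - 1) + 1) := by
        rw [Nat.count_eq_card_filter_range, ← Set.ncard_coe_finset]
        exact (Set.ncard_le_ncard himage (Set.toFinite _)).trans
          (Set.ncard_image_le (Set.toFinite _))
    _ ≤ _ := by
      refine hcount.trans ?_
      have hlow := Nat.count_le (p := Q) (n := 2 ^ m)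
      have hblocks : ∑ M ∈ Ico m (k - 1), Nat.count (fun r => Q (2 ^ M + r)) (2 ^ M) ≤
          ∑ M ∈ Ico m (k - 1), (2 * ⌊√(2 ^ (k + 1) * log 2 * (M + 1))⌋₊ + 1) :=
        sum_le_sum fun M hM => count_satisfactory_block_le (by simp at hM; omega)
          (by simp at hM; omega)
      omega

lemma sqrt_le_two_thirds_mul_sub {x : ℝ} (hx : 0 ≤ x) :
    √x ≤ 2 / 3 * (√(x + 1) ^ 3 - √x ^ 3) := by
  have hr := sq_sqrt hx
  have hb := sq_sqrt (by linarith : 0 ≤ x + 1)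
  have key : 3 / 2 * √x + √x ^ 3 ≤ √(x + 1) ^ 3 := by
    refine (pow_le_pow_iff_left₀ (by positivity) (by positivity) two_ne_zero).1 ?_
    calc (3 / 2 * √x + √x ^ 3) ^ 2 = 9 / 4 * √x ^ 2 + 3 * (√x ^ 2) ^ 2 + (√x ^ 2) ^ 3 := by ring
      _ ≤ (√(x + 1) ^ 2) ^ 3 := by rw [hr, hb]; nlinarith
      _ = (√(x + 1) ^ 3) ^ 2 := by ring
  linarith

lemma sum_sqrt_succ_le {a b : ℕ} (hab : a ≤ b) :
    ∑ M ∈ Ico a b, √((M : ℝ) + 1) ≤ 2 / 3 * (√((b : ℝ) + 1) ^ 3 - √((a : ℝ) + 1) ^ 3) := by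
  rw [← sum_Ico_sub (fun M : ℕ => √((M : ℝ) + 1) ^ 3) hab, mul_sum]
  refine sum_le_sum fun M _ => ?_
  push_cast
  exact sqrt_le_two_thirds_mul_sub (by positivity)

lemma two_rpow_div_three_mul_sqrt_eq (k : ℕ) :
    (2 : ℝ) ^ (((k : ℝ) + 5) / 2) / 3 * √((k : ℝ) ^ 3 * log 2) =
      4 / 3 * √(2 ^ (k + 1) * log 2) * √k ^ 3 := by
  have h2 : (2 : ℝ) ^ (((k : ℝ) + 5) / 2) = 4 * √(2 ^ (k + 1)) := by
    rw [sqrt_eq_rpow, ← rpow_natCast, ← rpow_mul (by norm_num),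
      show (4 : ℝ) = 2 ^ (2 : ℝ) by norm_num, ← rpow_add (by norm_num)]
    push_cast
    ring_nf
  have hk : √((k : ℝ) ^ 3) = √k ^ 3 := by
    rw [← sqrt_sq (by positivity : 0 ≤ √(k : ℝ) ^ 3), ← pow_mul, mul_comm, pow_mul,
      sq_sqrt (Nat.cast_nonneg k)]
  rw [h2, sqrt_mul (by positivity), sqrt_mul (by positivity), hk]
  ring

lemma two_pow_lt_sqrt_mul {k m : ℕ} (hm : 1 ≤ m) (hmk : 2 * m ≤ k + 4) :
    (2 : ℝ) ^ m < 4 / 3 * √(2 ^ (k + 1) * log 2) * √((m : ℝ) + 1) ^ 3 := by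
  refine (pow_lt_pow_iff_left₀ (by positivity) (by positivity) two_ne_zero).1 ?_
  have hlog := log_two_gt_d9
  have hm8 : (8 : ℝ) ≤ ((m : ℝ) + 1) ^ 3 := by
    have : (2 : ℝ) ≤ m + 1 := by norm_cast; omega
    calc (8 : ℝ) = 2 ^ 3 := by norm_num
      _ ≤ _ := pow_le_pow_left₀ (by norm_num) this 3
  have hpow : ((2 : ℝ) ^ m) ^ 2 ≤ 8 * 2 ^ (k + 1) := by
    rw [← pow_mul, show (8 : ℝ) = 2 ^ 3 by norm_num, ← pow_add]
    exact pow_le_pow_right₀ (by norm_num) (by omega)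
  have hconst : 8 < 16 / 9 * log 2 * ((m : ℝ) + 1) ^ 3 := by nlinarith
  calc ((2 : ℝ) ^ m) ^ 2 ≤ 8 * 2 ^ (k + 1) := hpow
    _ < 16 / 9 * log 2 * ((m : ℝ) + 1) ^ 3 * 2 ^ (k + 1) := by gcongr
    _ = _ := by
      rw [mul_pow, mul_pow, sq_sqrt (by positivity), ← pow_mul, show 3 * 2 = 2 * 3 by rfl, pow_mul,
        sq_sqrt (by positivity)]
      ring

lemma ncard_satisfactory_le_sum_sqrt {k m : ℕ} (hm : 1 ≤ m) (hmk : m ≤ k - 1) :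
    (Set.ncard {n : ℕ | 2 ^ (k - 1) ≤ n ∧ n ≤ 2 ^ k - 1 ∧ IsSatisfactory k (SCode k n)} : ℝ) ≤
      1 + 2 ^ m + ((k - 1 - m : ℕ) : ℝ) +
        2 * √(2 ^ (k + 1) * log 2) * ∑ M ∈ Ico m (k - 1), √((M : ℝ) + 1) := by
  have hfloor (M : ℕ) :
      (⌊√(2 ^ (k + 1) * log 2 * (M + 1))⌋₊ : ℝ) ≤ √(2 ^ (k + 1) * log 2) * √((M : ℝ) + 1) :=
    (Nat.floor_le (sqrt_nonneg _)).trans_eq (sqrt_mul (by positivity) _)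
  calc _ ≤ ((1 + 2 ^ m + ∑ M ∈ Ico m (k - 1),
        (2 * ⌊√(2 ^ (k + 1) * log 2 * (M + 1))⌋₊ + 1) : ℕ) : ℝ) := by
        exact_mod_cast ncard_satisfactory_le hm hmk
    _ ≤ 1 + 2 ^ m + ∑ M ∈ Ico m (k - 1),
        (2 * (√(2 ^ (k + 1) * log 2) * √((M : ℝ) + 1)) + 1) := by
        push_cast
        gcongr with M
        exact hfloor M
    _ = _ := by
        rw [sum_add_distrib, ← mul_sum, ← mul_sum, sum_const, Nat.card_Ico, nsmul_one]
        ring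

/-- The number `N_k` of `n ∈ [2^(k-1), 2^k - 1]` for which
`S_{n,k}` is satisfactory obeys `N_k < k + (2^((k+5)/2)/3)·√(k³ ln 2)`. -/
theorem stmt16 (k : ℕ) (hk : 2 ≤ k) :
    ((Set.ncard {n : ℕ | 2 ^ (k - 1) ≤ n ∧ n ≤ 2 ^ k - 1 ∧
        IsSatisfactory k (SCode k n)} : ℕ) : ℝ) <
      (k : ℝ) + (2 : ℝ) ^ (((k : ℝ) + 5) / 2) / 3 *
        Real.sqrt ((k : ℝ) ^ 3 * Real.log 2) := by
  set m := min (k - 1) ((k + 4) / 2)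
  have hN := ncard_satisfactory_le_sum_sqrt (k := k) (m := m) (by omega) (by omega)
  have hsum := mul_le_mul_of_nonneg_left (sum_sqrt_succ_le (show m ≤ k - 1 by omega))
    (sqrt_nonneg (2 ^ (k + 1) * log 2))
  have hm := two_pow_lt_sqrt_mul (k := k) (m := m) (by omega) (by omega)
  have hk1 : ((k - 1 : ℕ) : ℝ) = k - 1 := by rw [Nat.cast_sub (by omega), Nat.cast_one]
  rw [Nat.cast_sub (by omega : m ≤ k - 1), hk1] at hN
  rw [hk1, sub_add_cancel] at hsum
  rw [two_rpow_div_three_mul_sqrt_eq]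
  linarith
end

section
/- Let k ≥ 6 and let t be an integer with 1 ≤ t ≤ 2^{k−6}/((k−1)·ln 2) − 1/4. Then the (generalized) code S_{n,k} with n = 2^{k−3}(4t+1) is ugly (not satisfactory); in particular it is not proper. -/
open Finset

/-!
Put `x = 1/(4t+1)`, `w = t·2^(k-2) = n(1-x)/2` and `p = w/n = (1-x)/2`. Bit `k-3` of the column
values, and the sum of bits `k-1` and `k-3`, give two distinct codewords of weight `w`, so
`P_ue(p) ≥ 2 p^w (1-p)^(n-w)`. Summing the logarithm series,
`(1+x) log(1+x) + (1-x) log(1-x) = ∑ x^(2j+2) / ((2j+1)(j+1)) > x²`, hence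
`log (p^w (1-p)^(n-w)) > n (x²/2 - log 2)`, and the hypothesis on `t` says exactly that
`(k-1) log 2 ≤ n x²/2`. So `P_ue(p) > 2^(k-n) ≥ (|C| - 1)/2^n = P_ue(1/2)`: the first inequality
makes the code ugly, the two together make it improper.
-/

open Real

section Weights

variable {n : ℕ} (C : Submodule (ZMod 2) (Fin n → ZMod 2))

lemma sum_numWt_le_card : ∑ w ∈ Icc 1 n, numWt C w ≤ Nat.card C := by
  classical
  have hfib := card_eq_sum_card_fiberwise (s := univ.filter (· ∈ C)) (t := range (n + 1))
    (f := hammingNorm) fun c _ => mem_range_succ_iff.2 <| by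
      simpa using hammingNorm_le_card_fintype (x := c)
  calc ∑ w ∈ Icc 1 n, numWt C w
      = ∑ w ∈ Icc 1 n, #{c ∈ univ.filter (· ∈ C) | hammingNorm c = w} := by
        refine sum_congr rfl fun w _ => ?_
        rw [numWt, ← Set.ncard_coe_finset, filter_filter]
        simp
    _ ≤ ∑ w ∈ range (n + 1), #{c ∈ univ.filter (· ∈ C) | hammingNorm c = w} :=
        sum_le_sum_of_subset fun w hw => by simp at hw ⊢; omega
    _ = Nat.card C := by
        rw [← hfib, Nat.card_eq_fintype_card, ← Fintype.card_coe]
        simp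

lemma Pue_half_le {k : ℕ} (hC : Module.finrank (ZMod 2) C ≤ k) :
    Pue C (1 / 2) ≤ (2 : ℝ) ^ ((k : ℤ) - n) := by
  have hcard : Nat.card C ≤ 2 ^ k := by
    rw [Module.natCard_eq_pow_finrank (K := ZMod 2), Nat.card_zmod]
    exact Nat.pow_le_pow_right two_pos hC
  have hsum : ∑ w ∈ Icc 1 n, (numWt C w : ℝ) ≤ 2 ^ k := by
    exact_mod_cast (sum_numWt_le_card C).trans hcard
  calc Pue C (1 / 2) = (∑ w ∈ Icc 1 n, (numWt C w : ℝ)) * (1 / 2) ^ n := by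
        rw [Pue, sum_mul]
        refine sum_congr rfl fun w hw => ?_
        rw [show (1 : ℝ) - 1 / 2 = 1 / 2 by norm_num, mul_assoc, ← pow_add,
          Nat.add_sub_cancel' (mem_Icc.1 hw).2]
    _ ≤ 2 ^ k * (1 / 2) ^ n := by gcongr
    _ = (2 : ℝ) ^ ((k : ℤ) - n) := by
        rw [zpow_sub₀ two_ne_zero, zpow_natCast, zpow_natCast, one_div, inv_pow, div_eq_mul_inv]

lemma numWt_mul_le_Pue {w : ℕ} (hw : w ∈ Icc 1 n) {p : ℝ} (hp₀ : 0 ≤ p) (hp₁ : p ≤ 1) :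
    numWt C w * p ^ w * (1 - p) ^ (n - w) ≤ Pue C p := by
  have : 0 ≤ 1 - p := by linarith
  exact single_le_sum (f := fun w => (numWt C w : ℝ) * p ^ w * (1 - p) ^ (n - w))
    (fun _ _ => by positivity) hw

lemma two_le_numWt {c₁ c₂ : Fin n → ZMod 2} (hne : c₁ ≠ c₂) (h₁ : c₁ ∈ C) (h₂ : c₂ ∈ C)
    {w : ℕ} (hw₁ : hammingNorm c₁ = w) (hw₂ : hammingNorm c₂ = w) : 2 ≤ numWt C w := by
  rw [← Set.ncard_pair hne]
  refine Set.ncard_le_ncard ?_ (Set.toFinite _)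
  rintro c (rfl | rfl)
  exacts [⟨h₁, hw₁⟩, ⟨h₂, hw₂⟩]

lemma not_isSatisfactory_and_not_isProper {k : ℕ} (hC : Module.finrank (ZMod 2) C ≤ k)
    {p : ℝ} (hp : p ∈ Set.Icc (0 : ℝ) (1 / 2)) (hlt : (2 : ℝ) ^ ((k : ℤ) - n) < Pue C p) :
    ¬ IsSatisfactory k C ∧ ¬ IsProper C := by
  have hhalf : (1 / 2 : ℝ) ∈ Set.Icc (0 : ℝ) (1 / 2) := by norm_num
  refine ⟨fun hsat => (hsat p hp).not_gt hlt, fun hprop => ?_⟩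
  exact ((hprop hp hhalf hp.2).trans (Pue_half_le C hC)).not_gt hlt

end Weights

lemma finrank_GSCode_le (k n : ℕ) : Module.finrank (ZMod 2) (GSCode k n) ≤ k := by
  unfold GSCode
  exact (finrank_range_le_card _).trans_eq (Fintype.card_fin k)

lemma sq_lt_one_add_mul_log_add_one_sub_mul_log {x : ℝ} (hx₀ : x ≠ 0) (hx₁ : |x| < 1) :
    x ^ 2 < (1 + x) * log (1 + x) + (1 - x) * log (1 - x) := by
  have hsq : |x ^ 2| < 1 := by rw [abs_pow]; nlinarith [abs_nonneg x]
  have hsum := ((hasSum_log_sub_log_of_abs_lt_one hx₁).mul_left x).sub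
    (hasSum_pow_div_log_of_abs_lt_one hsq)
  have hlog : log (1 + x) + log (1 - x) = log (1 - x ^ 2) := by
    rw [← log_mul (by linarith [neg_abs_le x, le_abs_self x]) (by linarith [le_abs_self x])]
    ring_nf
  have hterm (k : ℕ) : x * (2 * (1 / (2 * k + 1)) * x ^ (2 * k + 1)) - (x ^ 2) ^ (k + 1) / (k + 1)
      = (x ^ 2) ^ (k + 1) / ((2 * k + 1) * (k + 1)) := by
    field_simp
    ring
  simp only [hterm] at hsum
  have := sum_le_hasSum (range 2) (fun k _ => by positivity) hsum
  norm_num [Finset.sum_range_succ] at this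
  have h4 : 0 < x ^ 4 := by positivity
  linarith

lemma two_zpow_sub_lt_two_mul_pow_mul_pow {k n w : ℕ} {x : ℝ} (hn : 0 < n) (hx₀ : 0 < x)
    (hx₁ : x < 1) (hw : (w : ℝ) = n * (1 - x) / 2) (hwn : w ≤ n)
    (hk : ((k : ℝ) - 1) * log 2 ≤ n * x ^ 2 / 2) :
    (2 : ℝ) ^ ((k : ℤ) - n) < 2 * (((1 - x) / 2) ^ w * (1 - (1 - x) / 2) ^ (n - w)) := by
  have hq : 1 - (1 - x) / 2 = (1 + x) / 2 := by ring
  have hnw : ((n - w : ℕ) : ℝ) = n * (1 + x) / 2 := by push_cast [hwn]; linarith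
  have hpos : 0 < 2 * (((1 - x) / 2) ^ w * (1 - (1 - x) / 2) ^ (n - w)) := by
    rw [hq]; have : 0 < 1 - x := by linarith
    positivity
  have hlog : log (2 * (((1 - x) / 2) ^ w * (1 - (1 - x) / 2) ^ (n - w)))
      = log 2 + n / 2 * ((1 + x) * log (1 + x) + (1 - x) * log (1 - x)) - n * log 2 := by
    rw [hq, log_mul two_ne_zero (by positivity), log_mul (by positivity) (by positivity),
      log_pow, log_pow, hw, hnw, log_div (by linarith) two_ne_zero,
      log_div (by linarith) two_ne_zero]
    ring
  have hx : n / 2 * x ^ 2 < n / 2 * ((1 + x) * log (1 + x) + (1 - x) * log (1 - x)) :=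
    mul_lt_mul_of_pos_left (sq_lt_one_add_mul_log_add_one_sub_mul_log hx₀.ne'
      (by rwa [abs_of_pos hx₀])) (by positivity)
  rw [← exp_log hpos, hlog, ← rpow_intCast, rpow_def_of_pos two_pos, exp_lt_exp]
  push_cast
  nlinarith

lemma colVal_of_mem_block {k m j : ℕ} (hm : m < k) (h₁ : 2 ^ k - 2 ^ (m + 1) ≤ j)
    (h₂ : j < 2 ^ k - 2 ^ m) : colVal k j = 2 ^ m + (j + 2 ^ (m + 1) - 2 ^ k) := by
  have hpow : 2 ^ (m + 1) ≤ 2 ^ k := Nat.pow_le_pow_right two_pos hm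
  have hsucc : 2 ^ (m + 1) = 2 * 2 ^ m := by ring
  have hne : 2 ^ k - 1 - j ≠ 0 := by omega
  have hlog : Nat.log2 (2 ^ k - 1 - j) = m :=
    le_antisymm (Nat.lt_succ_iff.1 <| (Nat.log2_lt hne).2 (by omega))
      ((Nat.le_log2 hne).2 (by omega))
  rw [colVal, hlog]
  omega

lemma gcolVal_eq {m t j : ℕ} (ht : 1 ≤ t) (hj : j < 2 ^ m * (4 * t + 1)) :
    gcolVal (m + 3) (2 ^ m * (4 * t + 1)) j =
      if j < t * 2 ^ (m + 2) then 2 ^ (m + 2) + j % 2 ^ (m + 2)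
      else 2 ^ (m + 1) + (j - t * 2 ^ (m + 2)) := by
  obtain ⟨s, rfl⟩ : ∃ s, t = s + 1 := ⟨t - 1, by omega⟩
  have hP : 0 < 2 ^ m := Nat.two_pow_pos m
  have h1 : 2 ^ (m + 1) = 2 * 2 ^ m := by ring
  have h2 : 2 ^ (m + 2) = 4 * 2 ^ m := by ring
  have h3 : 2 ^ (m + 3) = 8 * 2 ^ m := by ring
  have hn : 2 ^ m * (4 * (s + 1) + 1) - 2 ^ (m + 2) = 2 ^ (m + 2) * s + 2 ^ m := by
    rw [h2, Nat.sub_eq_of_eq_add]; ring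
  have hdiv : (2 ^ m * (4 * (s + 1) + 1) - 2 ^ (m + 2)) / 2 ^ (m + 2) = s := by
    rw [hn, Nat.mul_add_div (by omega), Nat.div_eq_of_lt (by omega), add_zero]
  have hT : (s + 1) * 2 ^ (m + 2) = s * 2 ^ (m + 2) + 2 ^ (m + 2) := add_one_mul _ _
  have hN : 2 ^ m * (4 * (s + 1) + 1) = s * 2 ^ (m + 2) + 2 ^ (m + 2) + 2 ^ m := by
    rw [h2]; ring
  have hmod (h₁ : s * 2 ^ (m + 2) ≤ j) (h₂ : j < s * 2 ^ (m + 2) + 2 ^ (m + 2)) :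
      j % 2 ^ (m + 2) = j - s * 2 ^ (m + 2) := by
    conv_lhs => rw [← Nat.sub_add_cancel h₁]
    rw [Nat.add_mul_mod_self_right, Nat.mod_eq_of_lt (by omega)]
  simp only [gcolVal, show m + 3 - 1 = m + 2 from rfl, hdiv, hT]
  generalize s * 2 ^ (m + 2) = S at hN hj hmod ⊢
  by_cases hjS : j < S
  · rw [if_pos hjS, if_pos (by omega)]
  rw [if_neg hjS]
  by_cases hjT : j < S + 2 ^ (m + 2)
  · rw [if_pos hjT, colVal_of_mem_block (m := m + 2) (by omega) (by omega) (by omega)]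
    rw [hmod (by omega) hjT]
    omega
  · rw [if_neg hjT, colVal_of_mem_block (m := m + 1) (by omega) (by omega) (by omega)]
    omega

section GcolValBits

variable {m t j : ℕ}

lemma testBit_gcolVal_of_lt (ht : 1 ≤ t) (hj : j < 2 ^ m * (4 * t + 1)) :
    (gcolVal (m + 3) (2 ^ m * (4 * t + 1)) j).testBit m =
      (decide (j < t * 2 ^ (m + 2)) && j.testBit m) := by
  rw [gcolVal_eq ht hj]
  split_ifs with hjT
  · rw [Nat.testBit_two_pow_add_gt (by omega), Nat.testBit_mod_two_pow]
    simp [hjT]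
  · rw [Nat.testBit_two_pow_add_gt (by omega), Nat.testBit_eq_false_of_lt]
    · simp [hjT]
    · have : 2 ^ m * (4 * t + 1) = t * 2 ^ (m + 2) + 2 ^ m := by ring
      omega

lemma testBit_gcolVal_top (ht : 1 ≤ t) (hj : j < 2 ^ m * (4 * t + 1)) :
    (gcolVal (m + 3) (2 ^ m * (4 * t + 1)) j).testBit (m + 2) =
      decide (j < t * 2 ^ (m + 2)) := by
  rw [gcolVal_eq ht hj]
  split_ifs with hjT
  · rw [Nat.testBit_two_pow_add_eq, Nat.testBit_eq_false_of_lt (Nat.mod_lt _ (Nat.two_pow_pos _))]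
    simp [hjT]
  · rw [Nat.testBit_eq_false_of_lt]
    · simp [hjT]
    · have : 2 ^ (m + 2) = 2 * 2 ^ (m + 1) := by ring
      have : 2 ^ (m + 1) = 2 * 2 ^ m := by ring
      have : 2 ^ m * (4 * t + 1) = t * 2 ^ (m + 2) + 2 ^ m := by ring
      omega

end GcolValBits

lemma count_testBit_mul_two_pow (b q : ℕ) :
    Nat.count (fun j => j.testBit b) (q * 2 ^ (b + 1)) = q * 2 ^ b := by
  have hmod (x : ℕ) : x.testBit b = (x % 2 ^ (b + 1)).testBit b := by
    simp [Nat.testBit_mod_two_pow]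
  have hperiod (q r : ℕ) : (q * 2 ^ (b + 1) + r).testBit b = r.testBit b := by
    rw [hmod, Nat.mul_add_mod_self_right, ← hmod]
  have hbase : Nat.count (fun j => j.testBit b) (2 ^ (b + 1)) = 2 ^ b := by
    rw [pow_succ, mul_two, Nat.count_add,
      Nat.count_of_forall_not fun r hr => by simp [Nat.testBit_eq_false_of_lt hr],
      Nat.count_of_forall fun r hr => by
        simp [Nat.testBit_two_pow_add_eq, Nat.testBit_eq_false_of_lt hr],
      zero_add]
  induction q with
  | zero => simp
  | succ q ih =>
    rw [add_one_mul, Nat.count_add, ih]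
    simp only [hperiod, hbase, add_one_mul]

lemma card_filter_fin_lt_and {n T : ℕ} (hT : T ≤ n) (p : ℕ → Prop) [DecidablePred p] :
    #{j : Fin n | (j : ℕ) < T ∧ p j} = Nat.count p T := by
  rw [Nat.count_eq_card_filter_range, ← card_map Fin.valEmbedding]
  congr 1
  ext j
  simp only [mem_map, mem_filter, mem_univ, true_and, Fin.valEmbedding_apply, mem_range]
  exact ⟨fun ⟨i, hi, hij⟩ => hij ▸ hi, fun hj => ⟨⟨j, by omega⟩, hj, rfl⟩⟩

/-- The generator row of `GSCode k n` that reads off bit `b` of the column values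
(row `k - b` in the paper's 1-based numbering). -/
def gsBitRow (k n b : ℕ) : Fin n → ZMod 2 :=
  fun j => if (gcolVal k n j).testBit b then 1 else 0

lemma gsBitRow_mem_GSCode {k n b : ℕ} (hb : b < k) : gsBitRow k n b ∈ GSCode k n :=
  Submodule.subset_span ⟨⟨k - 1 - b, by omega⟩, by
    funext j
    simp [gsBitRow, show k - (k - 1 - b + 1) = b by omega]⟩

lemma two_le_numWt_GSCode {m t : ℕ} (ht : 1 ≤ t) :
    2 ≤ numWt (GSCode (m + 3) (2 ^ m * (4 * t + 1))) (t * 2 ^ (m + 1)) := by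
  have hTn : t * 2 ^ (m + 2) ≤ 2 ^ m * (4 * t + 1) :=
    le_of_le_of_eq (Nat.le_add_right _ (2 ^ m)) (by ring)
  have hcount : Nat.count (fun j => j.testBit m) (t * 2 ^ (m + 2)) = t * 2 ^ (m + 1) := by
    rw [show t * 2 ^ (m + 2) = 2 * t * 2 ^ (m + 1) by ring, count_testBit_mul_two_pow]
    ring
  have hw₁ : hammingNorm (gsBitRow (m + 3) (2 ^ m * (4 * t + 1)) m) = t * 2 ^ (m + 1) := by
    rw [← hcount, ← card_filter_fin_lt_and hTn]
    unfold hammingNorm gsBitRow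
    congr 1; ext j
    simp [testBit_gcolVal_of_lt ht j.2]
  have hw₂ : hammingNorm (gsBitRow (m + 3) (2 ^ m * (4 * t + 1)) (m + 2) +
      gsBitRow (m + 3) (2 ^ m * (4 * t + 1)) m) = t * 2 ^ (m + 1) := by
    have hcompl := card_filter_add_card_filter_not (s := range (t * 2 ^ (m + 2)))
      (p := fun j => j.testBit m)
    rw [← Nat.count_eq_card_filter_range, ← Nat.count_eq_card_filter_range, card_range,
      hcount, ← card_filter_fin_lt_and hTn] at hcompl
    have hT : t * 2 ^ (m + 2) = 2 * (t * 2 ^ (m + 1)) := by ring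
    rw [← card_filter_fin_lt_and hTn] at hcount
    calc _ = #{j : Fin (2 ^ m * (4 * t + 1)) |
          (j : ℕ) < t * 2 ^ (m + 2) ∧ ¬ (j : ℕ).testBit m} := by
          unfold hammingNorm gsBitRow
          congr 1; ext j
          simp only [mem_filter, mem_univ, true_and, Pi.add_apply, testBit_gcolVal_of_lt ht j.2,
            testBit_gcolVal_top ht j.2]
          by_cases hj : (j : ℕ) < t * 2 ^ (m + 2) <;> by_cases hb : (j : ℕ).testBit m <;>
            simp [hj, hb, show (1 : ZMod 2) + 1 = 0 from rfl]
      _ = t * 2 ^ (m + 1) := by omega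
  have h0 : 0 < 2 ^ m * (4 * t + 1) := by positivity
  have hne : gsBitRow (m + 3) (2 ^ m * (4 * t + 1)) m ≠
      gsBitRow (m + 3) (2 ^ m * (4 * t + 1)) (m + 2) +
        gsBitRow (m + 3) (2 ^ m * (4 * t + 1)) m := by
    intro h
    have := congrFun h ⟨0, h0⟩
    simp [gsBitRow, testBit_gcolVal_of_lt ht h0, testBit_gcolVal_top ht h0] at this
    omega
  exact two_le_numWt _ hne (gsBitRow_mem_GSCode (by omega))
    (add_mem (gsBitRow_mem_GSCode (by omega)) (gsBitRow_mem_GSCode (by omega))) hw₁ hw₂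

lemma two_zpow_sub_lt_two_mul_pow_mul_pow_of_le {m t : ℕ} (ht₁ : 1 ≤ t)
    (ht₂ : (t : ℝ) ≤ 2 ^ m / (((m : ℝ) + 5) * log 2) - 1 / 4) :
    (2 : ℝ) ^ (((m + 6 : ℕ) : ℤ) - (2 ^ (m + 3) * (4 * t + 1) : ℕ)) <
      2 * (((1 - 1 / (4 * t + 1)) / 2) ^ (t * 2 ^ (m + 4)) *
        (1 - (1 - 1 / (4 * t + 1)) / 2) ^ (2 ^ (m + 3) * (4 * t + 1) - t * 2 ^ (m + 4))) := by
  have htR : (1 : ℝ) ≤ t := by exact_mod_cast ht₁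
  have hx₁ : 1 / (4 * (t : ℝ) + 1) < 1 := by
    rw [div_lt_one (by positivity)]
    linarith
  have hw : ((t * 2 ^ (m + 4) : ℕ) : ℝ) =
      (2 ^ (m + 3) * (4 * t + 1) : ℕ) * (1 - 1 / (4 * t + 1)) / 2 := by
    push_cast; field_simp; ring
  have hwn : t * 2 ^ (m + 4) ≤ 2 ^ (m + 3) * (4 * t + 1) :=
    le_of_le_of_eq (Nat.le_add_right _ (2 ^ (m + 3) * (2 * t + 1))) (by ring)
  have hlog : 0 < ((m : ℝ) + 5) * log 2 := by positivity
  have hle := (le_div_iff₀ hlog).1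
    (by linarith : (t : ℝ) + 1 / 4 ≤ 2 ^ m / (((m : ℝ) + 5) * log 2))
  refine two_zpow_sub_lt_two_mul_pow_mul_pow (by positivity) (by positivity) hx₁ hw hwn ?_
  push_cast
  rw [le_div_iff₀ two_pos]
  field_simp
  nlinarith [show (2 : ℝ) ^ (m + 3) = 8 * 2 ^ m by ring]

/-- For `k ≥ 6` and `1 ≤ t ≤ 2^(k-6)/((k-1) ln 2) - 1/4`, the
generalized code `S_{n,k}` with `n = 2^(k-3)·(4t+1)` is ugly (hence not proper). -/
theorem stmt18 (k t : ℕ) (hk : 6 ≤ k) (ht1 : 1 ≤ t)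
    (ht2 : (t : ℝ) ≤ (2 : ℝ) ^ (k - 6) / (((k : ℝ) - 1) * Real.log 2) - 1 / 4) :
    ¬ IsSatisfactory k (GSCode k (2 ^ (k - 3) * (4 * t + 1))) ∧
    ¬ IsProper (GSCode k (2 ^ (k - 3) * (4 * t + 1))) := by
  obtain ⟨m, rfl⟩ : ∃ m, k = m + 6 := ⟨k - 6, by omega⟩
  rw [show m + 6 - 3 = m + 3 by omega]
  rw [Nat.add_sub_cancel, show ((m + 6 : ℕ) : ℝ) - 1 = m + 5 by push_cast; ring] at ht2
  set x : ℝ := 1 / (4 * t + 1) with hx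
  have hx₀ : 0 ≤ x := by rw [hx]; positivity
  have hx₁ : x ≤ 1 := by
    rw [hx, div_le_one (by positivity)]
    linarith [(Nat.cast_nonneg t : (0 : ℝ) ≤ t)]
  have hp₀ : 0 ≤ (1 - x) / 2 := by linarith
  have hp₁ : (1 - x) / 2 ≤ 1 / 2 := by linarith
  refine not_isSatisfactory_and_not_isProper _ (finrank_GSCode_le _ _) ⟨hp₀, hp₁⟩ ?_
  calc _ < 2 * (((1 - x) / 2) ^ _ * (1 - (1 - x) / 2) ^ _) :=
        two_zpow_sub_lt_two_mul_pow_mul_pow_of_le ht1 ht2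
    _ ≤ numWt (GSCode (m + 6) (2 ^ (m + 3) * (4 * t + 1))) (t * 2 ^ (m + 4)) *
          ((1 - x) / 2) ^ _ * (1 - (1 - x) / 2) ^ _ := by
        rw [mul_assoc]
        have : 0 ≤ 1 - (1 - x) / 2 := by linarith
        gcongr
        exact_mod_cast two_le_numWt_GSCode (m := m + 3) ht1
    _ ≤ _ := numWt_mul_le_Pue _ (mem_Icc.2 ⟨Nat.mul_pos (by omega) (by positivity),
        le_of_le_of_eq (Nat.le_add_right _ (2 ^ (m + 3) * (2 * t + 1))) (by ring)⟩)
        hp₀ (by linarith)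
end
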